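/- arXiv:1407.1486 — 8 statements merged into one kernel-verified Lean document; each statement's English description precedes it below -/
import Mathlib

section
/- For any real x > 0 and any η with 0 < η < 1, the Gamma function satisfies Γ(x+η)/Γ(x) < x^η. -/
open Real

/-- Non-strict Gautschi inequality, from log-convexity of Gamma. -/
lemma gautschi_le (x b : ℝ) (hx : 0 < x) (hb0 : 0 < b) (hb1 : b < 1) :
    Real.Gamma (x + b) ≤ Real.Gamma x * x ^ b := by
  have hΓ : 0 < Real.Gamma x := Real.Gamma_pos_of_pos hx
  have h := Real.Gamma_mul_add_mul_le_rpow_Gamma_mul_rpow_Gamma hx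
    (show (0:ℝ) < x + 1 by linarith) (show 0 < 1 - b by linarith) hb0 (by ring)
  have h1 : (1 - b) * x + b * (x + 1) = x + b := by ring
  rw [h1, Real.Gamma_add_one hx.ne'] at h
  calc Real.Gamma (x + b) ≤ Real.Gamma x ^ (1 - b) * (x * Real.Gamma x) ^ b := h
    _ = Real.Gamma x * x ^ b := by
        rw [Real.mul_rpow hx.le hΓ.le, ← mul_assoc,
          mul_comm (Real.Gamma x ^ (1 - b)) (x ^ b), mul_assoc,
          ← Real.rpow_add hΓ]
        norm_num [mul_comm]

theorem gamma_ratio_lt (x η : ℝ) (hx : 0 < x) (hη0 : 0 < η) (hη1 : η < 1) :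
    Real.Gamma (x + η) / Real.Gamma x < x ^ η := by
  have hΓ : 0 < Real.Gamma x := Real.Gamma_pos_of_pos hx
  by_contra hcon
  push_neg at hcon
  have hub : Real.Gamma (x + η) ≤ Real.Gamma x * x ^ η := gautschi_le x η hx hη0 hη1
  have heq : Real.Gamma (x + η) = Real.Gamma x * x ^ η := by
    refine le_antisymm hub ?_
    have := (le_div_iff₀ hΓ).mp hcon
    linarith [this]
  -- Step 1: deduce Γ(x+1/2) = Γ(x) * x^(1/2)
  have hhalf_le : Real.Gamma (x + 1/2) ≤ Real.Gamma x * x ^ (1/2 : ℝ) :=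
    gautschi_le x (1/2) hx (by norm_num) (by norm_num)
  have hhalf_ge : Real.Gamma x * x ^ (1/2 : ℝ) ≤ Real.Gamma (x + 1/2) := by
    have hΓh : 0 < Real.Gamma (x + 1/2) := Real.Gamma_pos_of_pos (by linarith)
    rcases lt_trichotomy η (1/2) with hlt | heq2 | hgt
    · -- Γ(x+η) ≤ Γ(x)^(1-2η) * Γ(x+1/2)^(2η)
      have h := Real.Gamma_mul_add_mul_le_rpow_Gamma_mul_rpow_Gamma hx
        (show (0:ℝ) < x + 1/2 by linarith) (show 0 < 1 - 2*η by linarith)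
        (show 0 < 2*η by linarith) (by ring)
      have h1 : (1 - 2*η) * x + 2*η * (x + 1/2) = x + η := by ring
      rw [h1, heq] at h
      have e1 : Real.Gamma x * x ^ η
          = Real.Gamma x ^ (1 - 2*η) * (Real.Gamma x ^ (2*η) * x ^ η) := by
        rw [← mul_assoc, ← Real.rpow_add hΓ]
        have : 1 - 2*η + 2*η = (1:ℝ) := by ring
        rw [this, Real.rpow_one]
      rw [e1] at h
      have h2 : Real.Gamma x ^ (2*η) * x ^ η ≤ Real.Gamma (x + 1/2) ^ (2*η) :=
        le_of_mul_le_mul_left h (Real.rpow_pos_of_pos hΓ _)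
      have h3 : (Real.Gamma x * x ^ (1/2 : ℝ)) ^ (2*η)
          = Real.Gamma x ^ (2*η) * x ^ η := by
        rw [Real.mul_rpow hΓ.le (Real.rpow_nonneg hx.le _), ← Real.rpow_mul hx.le]
        have : (1/2 : ℝ) * (2*η) = η := by ring
        rw [this]
      have h4 : (Real.Gamma x * x ^ (1/2:ℝ)) ^ (2*η) ≤ Real.Gamma (x + 1/2) ^ (2*η) := by
        rw [h3]; exact h2
      exact (Real.rpow_le_rpow_iff (by positivity) hΓh.le (by linarith)).mp h4
    · subst heq2
      exact heq.ge
    · -- Γ(x+η) ≤ Γ(x+1/2)^(2-2η) * Γ(x+1)^(2η-1)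
      have h := Real.Gamma_mul_add_mul_le_rpow_Gamma_mul_rpow_Gamma
        (show (0:ℝ) < x + 1/2 by linarith) (show (0:ℝ) < x + 1 by linarith)
        (show 0 < 2 - 2*η by linarith) (show 0 < 2*η - 1 by linarith) (by ring)
      have h1 : (2 - 2*η) * (x + 1/2) + (2*η - 1) * (x + 1) = x + η := by ring
      rw [h1, heq, Real.Gamma_add_one hx.ne'] at h
      have e1 : Real.Gamma x * x ^ η
          = (x * Real.Gamma x) ^ (2*η - 1) * (Real.Gamma x ^ (2 - 2*η) * x ^ (1 - η)) := by
        rw [Real.mul_rpow hx.le hΓ.le]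
        have e2 : x ^ (2*η-1) * Real.Gamma x ^ (2*η-1)
            * (Real.Gamma x ^ (2-2*η) * x ^ (1-η))
            = (x ^ (2*η-1) * x ^ (1-η)) * (Real.Gamma x ^ (2*η-1) * Real.Gamma x ^ (2-2*η)) := by
          ring
        rw [e2, ← Real.rpow_add hx, ← Real.rpow_add hΓ]
        have e3 : 2*η - 1 + (1 - η) = η := by ring
        have e4 : 2*η - 1 + (2 - 2*η) = (1:ℝ) := by ring
        rw [e3, e4, Real.rpow_one, mul_comm]
      rw [e1, mul_comm (Real.Gamma (x+1/2) ^ (2-2*η))] at h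
      have h2 : Real.Gamma x ^ (2 - 2*η) * x ^ (1 - η)
          ≤ Real.Gamma (x + 1/2) ^ (2 - 2*η) :=
        le_of_mul_le_mul_left h (Real.rpow_pos_of_pos (by positivity) _)
      have h3 : (Real.Gamma x * x ^ (1/2 : ℝ)) ^ (2 - 2*η)
          = Real.Gamma x ^ (2 - 2*η) * x ^ (1 - η) := by
        rw [Real.mul_rpow hΓ.le (Real.rpow_nonneg hx.le _), ← Real.rpow_mul hx.le]
        have : (1/2 : ℝ) * (2 - 2*η) = 1 - η := by ring
        rw [this]
      have h4 : (Real.Gamma x * x ^ (1/2:ℝ)) ^ (2 - 2*η) ≤ Real.Gamma (x + 1/2) ^ (2 - 2*η) := by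
        rw [h3]; exact h2
      exact (Real.rpow_le_rpow_iff (by positivity) hΓh.le (by linarith)).mp h4
  have hhalf : Real.Gamma (x + 1/2) = Real.Gamma x * x ^ (1/2 : ℝ) :=
    le_antisymm hhalf_le hhalf_ge
  -- Step 2: contradiction via convexity at x + 3/2
  have h32 := Real.Gamma_mul_add_mul_le_rpow_Gamma_mul_rpow_Gamma
    (show (0:ℝ) < x + 1 by linarith) (show (0:ℝ) < x + 2 by linarith)
    (show (0:ℝ) < 1/2 by norm_num) (show (0:ℝ) < 1/2 by norm_num) (by norm_num)
  have h1 : (1/2 : ℝ) * (x + 1) + (1/2) * (x + 2) = (x + 1/2) + 1 := by ring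
  rw [h1] at h32
  rw [Real.Gamma_add_one (show x + 1/2 ≠ 0 by positivity), hhalf] at h32
  have hx1 : Real.Gamma (x + 1) = x * Real.Gamma x := Real.Gamma_add_one hx.ne'
  have hx2 : Real.Gamma (x + 2) = (x + 1) * (x * Real.Gamma x) := by
    have : x + 2 = (x + 1) + 1 := by ring
    rw [this, Real.Gamma_add_one (by positivity), hx1]
  rw [hx1, hx2] at h32
  have hrhs : (x * Real.Gamma x) ^ (1/2 : ℝ) * ((x+1) * (x * Real.Gamma x)) ^ (1/2 : ℝ)
      = (x+1) ^ (1/2 : ℝ) * (x * Real.Gamma x) := by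
    rw [← Real.mul_rpow (by positivity) (by positivity)]
    have : x * Real.Gamma x * ((x+1) * (x * Real.Gamma x))
        = (x+1) * (x * Real.Gamma x)^2 := by ring
    rw [this, Real.mul_rpow (by positivity) (by positivity)]
    rw [← Real.rpow_natCast (x * Real.Gamma x) 2, ← Real.rpow_mul (by positivity)]
    norm_num
  rw [hrhs] at h32
  set u := x ^ (1/2 : ℝ) with hu
  have huu : u * u = x := by
    rw [hu, ← Real.rpow_add hx]; norm_num
  set v := (x + 1) ^ (1/2 : ℝ) with hv
  have hvv : v * v = x + 1 := by
    rw [hv, ← Real.rpow_add (by linarith)]; norm_num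
  have hun : 0 < u := Real.rpow_pos_of_pos hx _
  have hvn : 0 < v := Real.rpow_pos_of_pos (by linarith) _
  -- h32 : (x+1/2) * (Γ x * u) ≤ v * (x * Γ x)
  have hsq := mul_self_le_mul_self (by positivity) h32
  have eL : (x + 1/2) * (Real.Gamma x * u) * ((x + 1/2) * (Real.Gamma x * u))
      = (x + 1/2)^2 * (Real.Gamma x)^2 * (u * u) := by ring
  have eR : v * (x * Real.Gamma x) * (v * (x * Real.Gamma x))
      = (v * v) * (x^2 * (Real.Gamma x)^2) := by ring
  rw [eL, eR, huu, hvv] at hsq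
  nlinarith [hsq, mul_pos (mul_pos hΓ hΓ) hx]
end

section
/- For any real x > 0 and any real η > 1, the Gamma function satisfies Γ(x+η)/Γ(x) > x^η. -/
theorem gamma_ratio_gt (x η : ℝ) (hx : 0 < x) (hη : 1 < η) :
    Real.Gamma (x + η) / Real.Gamma x > x ^ η := by
  set L : ℝ → ℝ := Real.log ∘ Real.Gamma with hL
  have hconv := Real.convexOn_log_Gamma
  set δ : ℝ := min 1 (η - 1) with hδ
  have hδ0 : 0 < δ := lt_min one_pos (by linarith)
  have hδη : δ ≤ η - 1 := min_le_right _ _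
  -- memberships
  have m1 : x ∈ Set.Ioi (0:ℝ) := hx
  have m2 : x + 1 ∈ Set.Ioi (0:ℝ) := by simp [Set.mem_Ioi]; linarith
  have m3 : x + δ ∈ Set.Ioi (0:ℝ) := by simp [Set.mem_Ioi]; linarith
  have m4 : x + 1 + δ ∈ Set.Ioi (0:ℝ) := by simp [Set.mem_Ioi]; linarith
  have m5 : x + η ∈ Set.Ioi (0:ℝ) := by simp [Set.mem_Ioi]; linarith
  -- Gamma functional equation in log form
  have hGpos : ∀ y : ℝ, 0 < y → 0 < Real.Gamma y := fun y hy => Real.Gamma_pos_of_pos hy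
  have hlog_step : ∀ y : ℝ, 0 < y → L (y + 1) = Real.log y + L y := by
    intro y hy
    have : Real.Gamma (y + 1) = y * Real.Gamma y := Real.Gamma_add_one hy.ne'
    simp only [hL, Function.comp_apply, this]
    rw [Real.log_mul hy.ne' (hGpos y hy).ne']
  -- slope on [x+δ, x+1+δ] equals log(x+δ)
  have hxδ : 0 < x + δ := by linarith
  have slope_mid : (L (x + 1 + δ) - L (x + δ)) / ((x + 1 + δ) - (x + δ)) = Real.log (x + δ) := by
    have e1 : x + 1 + δ = (x + δ) + 1 := by ring
    rw [e1, hlog_step (x + δ) hxδ]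
    have : (x + δ + 1) - (x + δ) = 1 := by ring
    rw [this]
    ring
  -- slope(x+δ, x+1+δ) ≤ slope(x+1, x+1+δ)
  have s1 : (L (x + δ) - L (x + 1 + δ)) / ((x + δ) - (x + 1 + δ)) ≤
      (L (x + 1) - L (x + 1 + δ)) / ((x + 1) - (x + 1 + δ)) := by
    apply hconv.secant_mono m4 m3 m2 (by intro h; nlinarith [sub_eq_zero.mp (by linarith [h] : (x+δ) - (x+1+δ) = 0)]) ?_ (by linarith [min_le_left 1 (η-1)])
    intro h
    have : (0:ℝ) = δ := by linarith [sub_eq_zero.mp (by linarith [h] : (x+1) - (x+1+δ) = 0)]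
    linarith
  -- slope(x+1, x+1+δ) ≤ slope(x+1, x+η)
  have s2 : (L (x + 1 + δ) - L (x + 1)) / ((x + 1 + δ) - (x + 1)) ≤
      (L (x + η) - L (x + 1)) / ((x + η) - (x + 1)) := by
    apply hconv.secant_mono m2 m4 m5 (by intro h; nlinarith [sub_eq_zero.mp (by linarith [h] : (x+1+δ) - (x+1) = 0)]) ?_ (by linarith)
    intro h
    have : η - 1 = 0 := by linarith [sub_eq_zero.mp (by linarith [h] : (x+η) - (x+1) = 0)]
    linarith
  -- rewrite s1 to the symmetric form
  have s1' : (L (x + 1 + δ) - L (x + δ)) / ((x + 1 + δ) - (x + δ)) ≤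
      (L (x + 1 + δ) - L (x + 1)) / ((x + 1 + δ) - (x + 1)) := by
    have e1 : (L (x + δ) - L (x + 1 + δ)) / ((x + δ) - (x + 1 + δ)) =
        (L (x + 1 + δ) - L (x + δ)) / ((x + 1 + δ) - (x + δ)) := by
      rw [← neg_div_neg_eq]; ring_nf
    have e2 : (L (x + 1) - L (x + 1 + δ)) / ((x + 1) - (x + 1 + δ)) =
        (L (x + 1 + δ) - L (x + 1)) / ((x + 1 + δ) - (x + 1)) := by
      rw [← neg_div_neg_eq]; ring_nf
    rw [← e1, ← e2]; exact s1
  have key : Real.log (x + δ) ≤ (L (x + η) - L (x + 1)) / ((x + η) - (x + 1)) := by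
    calc Real.log (x + δ) = (L (x + 1 + δ) - L (x + δ)) / ((x + 1 + δ) - (x + δ)) :=
          slope_mid.symm
      _ ≤ (L (x + 1 + δ) - L (x + 1)) / ((x + 1 + δ) - (x + 1)) := s1'
      _ ≤ (L (x + η) - L (x + 1)) / ((x + η) - (x + 1)) := s2
  have hlogx : Real.log x < Real.log (x + δ) := Real.log_lt_log hx (by linarith)
  have hη1 : (0:ℝ) < η - 1 := by linarith
  have hdenom : (x + η) - (x + 1) = η - 1 := by ring
  have main : L x + η * Real.log x < L (x + η) := by
    have h1 : Real.log x < (L (x + η) - L (x + 1)) / (η - 1) := by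
      rw [← hdenom]; exact lt_of_lt_of_le hlogx key
    have h2 : (η - 1) * Real.log x < L (x + η) - L (x + 1) := by
      rw [← lt_div_iff₀' hη1] at *
      calc Real.log x < (L (x + η) - L (x + 1)) / (η - 1) := h1
        _ = (η - 1)⁻¹ * (L (x + η) - L (x + 1)) := by rw [div_eq_inv_mul]
        _ ≤ _ := le_of_eq (by rw [div_eq_inv_mul])
    have h3 : L (x + 1) = Real.log x + L x := hlog_step x hx
    linarith
  -- exponentiate
  have hGx := hGpos x hx
  have hGxη := hGpos (x + η) (by linarith)
  have expL : ∀ y : ℝ, 0 < y → Real.exp (L y) = Real.Gamma y := by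
    intro y hy; exact Real.exp_log (hGpos y hy)
  have : Real.exp (L x + η * Real.log x) < Real.exp (L (x + η)) := Real.exp_lt_exp.mpr main
  rw [Real.exp_add, expL x hx, expL (x + η) (by linarith)] at this
  have hxpow : Real.exp (η * Real.log x) = x ^ η := by
    rw [Real.rpow_def_of_pos hx, mul_comm]
  rw [hxpow] at this
  rw [gt_iff_lt, lt_div_iff₀ hGx]
  linarith
end

section
/- Let α > 0, β ≥ 0, and δ satisfy 0 < δ < 1/α. Then for all natural numbers a ≤ b, the product ∏_{i=a}^{b} (1 - αδ/(1+(i+β)δ)) equals [Γ(b+1+δ^{-1}+β-α)/Γ(b+1+δ^{-1}+β)] · [Γ(a+δ^{-1}+β)/Γ(a+δ^{-1}+β-α)]. -/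
/-!
With `c = δ⁻¹ + β`, the `i`-th factor is `(i + c - α) / (i + c)`, and since `Γ (s + 1) = s Γ (s)`
the products of the numerators and of the denominators telescope to ratios of Gamma values.
-/

open Finset

theorem Real.prod_Ico_natCast_add_eq_Gamma_div {x : ℝ} {a b : ℕ} (hab : a ≤ b)
    (hx : 0 < (a : ℝ) + x) :
    ∏ i ∈ Ico a b, ((i : ℝ) + x) = Gamma (b + x) / Gamma (a + x) := by
  induction b, hab using Nat.le_induction with
  | base => rw [Ico_self, prod_empty, div_self (Gamma_pos_of_pos hx).ne']
  | succ n han ih =>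
    have hn : 0 < (n : ℝ) + x := by
      have : (a : ℝ) ≤ n := by exact_mod_cast han
      linarith
    rw [prod_Ico_succ_top han, ih, Nat.cast_succ, add_right_comm, Gamma_add_one hn.ne']
    ring

theorem one_sub_mul_div_one_add_mul_eq_div {α δ t : ℝ} (hδ : δ ≠ 0) (ht : t + δ⁻¹ ≠ 0) :
    1 - α * δ / (1 + t * δ) = (t + δ⁻¹ - α) / (t + δ⁻¹) := by
  have h : 1 + t * δ = (t + δ⁻¹) * δ := by rw [add_mul, inv_mul_cancel₀ hδ, add_comm]
  rw [h, mul_div_mul_right α _ hδ, one_sub_div ht]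

theorem prod_eq_gamma_ratio (α β δ : ℝ) (hα : 0 < α) (hβ : 0 ≤ β)
    (hδ0 : 0 < δ) (hδ : δ < α⁻¹) (a b : ℕ) (hab : a ≤ b) :
    ∏ i ∈ Finset.Icc a b, (1 - α * δ / (1 + ((i : ℝ) + β) * δ)) =
      Real.Gamma ((b : ℝ) + 1 + δ⁻¹ + β - α) / Real.Gamma ((b : ℝ) + 1 + δ⁻¹ + β) *
        (Real.Gamma ((a : ℝ) + δ⁻¹ + β) / Real.Gamma ((a : ℝ) + δ⁻¹ + β - α)) := by
  have hαδ : α < δ⁻¹ := (lt_inv_comm₀ hα hδ0).mpr hδ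
  have hpos : ∀ n : ℕ, 0 < (n : ℝ) + (β + δ⁻¹ - α) := fun n => by
    have : (0 : ℝ) ≤ n := n.cast_nonneg
    linarith
  have hpos' : ∀ n : ℕ, 0 < (n : ℝ) + (β + δ⁻¹) := fun n => by linarith [hpos n]
  calc ∏ i ∈ Icc a b, (1 - α * δ / (1 + ((i : ℝ) + β) * δ))
      = ∏ i ∈ Ico a (b + 1), ((i : ℝ) + (β + δ⁻¹ - α)) / ((i : ℝ) + (β + δ⁻¹)) := by
        rw [← Ico_add_one_right_eq_Icc]
        refine prod_congr rfl fun i _ => ?_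
        rw [one_sub_mul_div_one_add_mul_eq_div hδ0.ne' (by linarith [hpos' i])]
        ring_nf
    _ = Real.Gamma ((b : ℝ) + 1 + δ⁻¹ + β - α) / Real.Gamma ((a : ℝ) + δ⁻¹ + β - α) /
          (Real.Gamma ((b : ℝ) + 1 + δ⁻¹ + β) / Real.Gamma ((a : ℝ) + δ⁻¹ + β)) := by
        rw [prod_div_distrib, Real.prod_Ico_natCast_add_eq_Gamma_div (by omega) (hpos a),
          Real.prod_Ico_natCast_add_eq_Gamma_div (by omega) (hpos' a)]
        push_cast
        ring_nf
    _ = _ := by rw [div_div_div_comm, div_eq_mul_inv, inv_div]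
end

section
/- Let F : ℝ^d → ℝ^d be a continuous map that is strictly monotone (⟨x-y, F(x)-F(y)⟩ > 0 for all x ≠ y) and coercive (⟨x, F(x)⟩/|x| → ∞ as |x| → ∞). Then for every b ∈ ℝ^d the equation F(x) = b has a unique solution x ∈ ℝ^d. -/
/-!
Adding `(n + 1)⁻¹ • x` to `F` makes it strongly monotone, so each regularized equation has a
solution `xₙ`; coercivity keeps the `xₙ` bounded, and a limit point of them solves `F x = b`.

A continuous strongly monotone map is onto: mollifications of it are still strongly monotone
(the convolution averages the monotonicity inequality) and smooth. A smooth strongly monotone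
map has invertible derivative everywhere, so its range is open by the inverse function theorem;
the range is also closed, since strong monotonicity bounds preimages of bounded sequences.
Solutions of the mollified equations then accumulate at a solution of the original one.
-/

open scoped RealInnerProductSpace Convolution Topology
open Filter Function Metric MeasureTheory Set ContinuousLinearMap Bornology

theorem mem_range_of_tendsto_of_isBounded {X Y : Type*} [PseudoMetricSpace X] [ProperSpace X]
    [TopologicalSpace Y] [T2Space Y] {f : X → Y} (hf : Continuous f) {x : ℕ → X}
    (hx : IsBounded (range x)) {p : Y} (hp : Tendsto (f ∘ x) atTop (𝓝 p)) : p ∈ range f := by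
  obtain ⟨a, -, ψ, hψ, hxa⟩ := tendsto_subseq_of_bounded hx (mem_range_self ·)
  exact ⟨a, tendsto_nhds_unique ((hf.tendsto a).comp hxa) (hp.comp hψ.tendsto_atTop)⟩

variable {E : Type*} [NormedAddCommGroup E] [InnerProductSpace ℝ E]

def IsStronglyMonotone (ε : ℝ) (G : E → E) : Prop :=
  ∀ x y, ε * ‖x - y‖ ^ 2 ≤ ⟪x - y, G x - G y⟫

namespace IsStronglyMonotone

variable {ε : ℝ} {G : E → E}

theorem of_forall_inner_pos (h : ∀ x y, x ≠ y → 0 < ⟪x - y, G x - G y⟫) :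
    IsStronglyMonotone 0 G := fun x y => by
  rcases eq_or_ne x y with rfl | hxy
  · simp
  · simpa using (h x y hxy).le

theorem add_smul (h : IsStronglyMonotone ε G) (c : ℝ) :
    IsStronglyMonotone (ε + c) (fun x => G x + c • x) := by
  intro x y
  have hxy : G x + c • x - (G y + c • y) = (G x - G y) + c • (x - y) := by
    rw [smul_sub]; abel
  rw [hxy, inner_add_right, real_inner_smul_right, real_inner_self_eq_norm_sq]
  linarith [h x y]

theorem mul_norm_sub_le (h : IsStronglyMonotone ε G) (x y : E) :
    ε * ‖x - y‖ ≤ ‖G x - G y‖ := by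
  rcases eq_or_ne x y with rfl | hxy
  · simp
  have hpos : 0 < ‖x - y‖ := norm_pos_iff.2 (sub_ne_zero.2 hxy)
  have := (h x y).trans (real_inner_le_norm _ _)
  nlinarith

theorem injective (h : IsStronglyMonotone ε G) (hε : 0 < ε) : Injective G := by
  intro x y hxy
  have := h.mul_norm_sub_le x y
  rw [hxy, sub_self, norm_zero] at this
  have : ‖x - y‖ ≤ 0 := by nlinarith [norm_nonneg (x - y)]
  exact sub_eq_zero.1 (norm_le_zero_iff.1 this)

end IsStronglyMonotone

theorem isBounded_range_of_isStronglyMonotone {ε : ℝ} (hε : 0 < ε) {G : ℕ → E → E}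
    (hG : ∀ n, IsStronglyMonotone ε (G n)) {x : ℕ → E}
    (hGx : IsBounded (range fun n => G n (x n))) (hG0 : IsBounded (range fun n => G n 0)) :
    IsBounded (range x) := by
  obtain ⟨C, hC⟩ := isBounded_iff_forall_norm_le.1 (hGx.union hG0)
  refine isBounded_iff_forall_norm_le.2 ⟨ε⁻¹ * (C + C), ?_⟩
  rintro _ ⟨n, rfl⟩
  rw [le_inv_mul_iff₀ hε]
  calc ε * ‖x n‖ = ε * ‖x n - 0‖ := by rw [sub_zero]
    _ ≤ ‖G n (x n) - G n 0‖ := (hG n).mul_norm_sub_le _ _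
    _ ≤ ‖G n (x n)‖ + ‖G n 0‖ := norm_sub_le _ _
    _ ≤ C + C := add_le_add (hC _ (.inl ⟨n, rfl⟩)) (hC _ (.inr ⟨n, rfl⟩))

namespace IsStronglyMonotone

variable {ε : ℝ} {G : E → E}

theorem isClosed_range [ProperSpace E] (h : IsStronglyMonotone ε G) (hε : 0 < ε)
    (hG : Continuous G) : IsClosed (range G) := by
  refine IsSeqClosed.isClosed fun {u p} hu hup => ?_
  choose x hx using hu
  obtain rfl : G ∘ x = u := funext hx
  have hx : IsBounded (range x) :=
    isBounded_range_of_isStronglyMonotone hε (fun _ => h) (isBounded_range_of_tendsto _ hup)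
      (by simp only [range_const, isBounded_singleton])
  exact mem_range_of_tendsto_of_isBounded hG hx hup

theorem inner_fderiv_apply_self (h : IsStronglyMonotone ε G) {x : E}
    (hx : DifferentiableAt ℝ G x) (v : E) : ε * ‖v‖ ^ 2 ≤ ⟪v, fderiv ℝ G x v⟫ := by
  have hslope := ((innerSL ℝ v).continuous.tendsto _).comp
    (hx.hasFDerivAt.hasLineDerivAt v).tendsto_slope_zero_right
  refine ge_of_tendsto hslope ?_
  filter_upwards [self_mem_nhdsWithin] with t (ht : 0 < t)
  have hxt := h (x + t • v) x
  rw [add_sub_cancel_left, norm_smul, real_inner_smul_left, Real.norm_of_nonneg ht.le] at hxt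
  simp only [comp_apply, innerSL_apply_apply, real_inner_smul_right]
  rw [le_inv_mul_iff₀ ht]
  nlinarith

theorem fderiv (h : IsStronglyMonotone ε G) {x : E} (hx : DifferentiableAt ℝ G x) :
    IsStronglyMonotone ε (fderiv ℝ G x) := fun v w => by
  simpa only [map_sub] using h.inner_fderiv_apply_self hx (v - w)

variable [FiniteDimensional ℝ E]

theorem surjective_of_contDiff (h : IsStronglyMonotone ε G) (hε : 0 < ε)
    (hG : ContDiff ℝ 1 G) : Surjective G := by
  have hopen : IsOpenMap G := by
    refine isOpenMap_of_hasStrictFDerivAt_equiv (f' := fun x =>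
      (LinearEquiv.ofInjectiveEndo _ ((h.fderiv (hG.differentiable one_ne_zero x)).injective hε)
        ).toContinuousLinearEquiv) fun x => ?_
    exact hG.contDiffAt.hasStrictFDerivAt one_ne_zero
  have hclopen : IsClopen (range G) := ⟨h.isClosed_range hε hG.continuous, hopen.isOpen_range⟩
  exact range_eq_univ.1 (hclopen.eq_univ ⟨G 0, 0, rfl⟩)

theorem convolution [MeasurableSpace E] [BorelSpace E] (h : IsStronglyMonotone ε G)
    (hG : Continuous G) (φ : ContDiffBump (0 : E)) (μ : Measure E) [μ.IsAddHaarMeasure] :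
    IsStronglyMonotone ε (φ.normed μ ⋆[lsmul ℝ ℝ, μ] G) := by
  intro x y
  have hint : ∀ z, Integrable (fun t => φ.normed μ t • G (z - t)) μ := fun z =>
    (φ.continuous_normed.smul (hG.comp (continuous_const.sub continuous_id)))
      |>.integrable_of_hasCompactSupport φ.hasCompactSupport_normed.smul_right
  have hdiff : Integrable (fun t => φ.normed μ t • (G (x - t) - G (y - t))) μ := by
    simp_rw [smul_sub]
    exact (hint x).sub (hint y)
  calc ε * ‖x - y‖ ^ 2 = ∫ t, φ.normed μ t * (ε * ‖x - y‖ ^ 2) ∂μ := by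
        rw [integral_mul_const, φ.integral_normed, one_mul]
    _ ≤ ∫ t, ⟪x - y, φ.normed μ t • (G (x - t) - G (y - t))⟫ ∂μ := by
        refine integral_mono (φ.integrable_normed.mul_const _) (hdiff.const_inner _) fun t => ?_
        rw [real_inner_smul_right]
        simpa only [sub_sub_sub_cancel_right] using
          mul_le_mul_of_nonneg_left (h (x - t) (y - t)) (φ.nonneg_normed t)
    _ = ⟪x - y, (φ.normed μ ⋆[lsmul ℝ ℝ, μ] G) x - (φ.normed μ ⋆[lsmul ℝ ℝ, μ] G) y⟫ := by
        simp only [convolution_def, lsmul_apply]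
        rw [← integral_sub (hint x) (hint y), integral_inner hdiff]
        simp only [smul_sub]

theorem surjective (h : IsStronglyMonotone ε G) (hε : 0 < ε) (hG : Continuous G) :
    Surjective G := by
  borelize E
  intro b
  let φ (n : ℕ) : ContDiffBump (0 : E) :=
    ⟨1 / (n + 2), 1 / (n + 1), by positivity, by gcongr; linarith⟩
  have hφ : Tendsto (fun n => (φ n).rOut) atTop (𝓝 0) := tendsto_one_div_add_atTop_nhds_zero_nat
  let Gn (n : ℕ) := (φ n).normed .addHaar ⋆[lsmul ℝ ℝ, .addHaar] G
  have hGn (n : ℕ) : IsStronglyMonotone ε (Gn n) := h.convolution hG _ _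
  choose y hy using fun n => (hGn n).surjective_of_contDiff hε
    ((φ n).hasCompactSupport_normed.contDiff_convolution_left _ (φ n).contDiff_normed
      hG.locallyIntegrable) b
  have hyb : IsBounded (range y) := isBounded_range_of_isStronglyMonotone hε hGn
    (by simp only [hy, range_const, isBounded_singleton])
    (isBounded_range_of_tendsto _ (ContDiffBump.convolution_tendsto_right_of_continuous hφ hG 0))
  obtain ⟨a, -, ψ, hψ, hya⟩ := tendsto_subseq_of_bounded hyb (mem_range_self ·)
  have hlim : Tendsto (fun k => Gn (ψ k) (y (ψ k))) atTop (𝓝 (G a)) :=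
    ContDiffBump.convolution_tendsto_right (μ := .addHaar) (hφ.comp hψ.tendsto_atTop)
    (.of_forall fun _ => hG.aestronglyMeasurable) ((hG.tendsto a).comp tendsto_snd) hya
  simp only [hy] at hlim
  exact ⟨a, tendsto_nhds_unique hlim tendsto_const_nhds⟩

end IsStronglyMonotone

theorem exists_norm_le_of_inner_le_mul_norm {F : E → E}
    (hcoer : ∀ M > (0 : ℝ), ∃ R : ℝ, ∀ x, R ≤ ‖x‖ → M * ‖x‖ ≤ ⟪x, F x⟫) (M : ℝ) :
    ∃ K, ∀ x, ⟪x, F x⟫ ≤ M * ‖x‖ → ‖x‖ ≤ K := by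
  obtain ⟨R, hR⟩ := hcoer (max M 0 + 1) (by positivity)
  refine ⟨max R 0, fun x hx => ?_⟩
  by_contra! hxR
  have := hR x ((le_max_left _ _).trans hxR.le)
  nlinarith [le_max_left M 0, (le_max_right R 0).trans_lt hxR]

theorem monotone_coercive_surjective (d : ℕ)
    (F : EuclideanSpace ℝ (Fin d) → EuclideanSpace ℝ (Fin d))
    (hcont : Continuous F)
    (hmono : ∀ x y, x ≠ y → 0 < ⟪x - y, F x - F y⟫)
    (hcoer : ∀ M > (0 : ℝ), ∃ R : ℝ, ∀ x, R ≤ ‖x‖ → M * ‖x‖ ≤ ⟪x, F x⟫) :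
    ∀ b : EuclideanSpace ℝ (Fin d), ∃! x, F x = b := by
  intro b
  have hF := IsStronglyMonotone.of_forall_inner_pos hmono
  let c (n : ℕ) : ℝ := 1 / (n + 1)
  have hc (n : ℕ) : 0 < c n := by positivity
  choose x hx using fun n => (zero_add (c n) ▸ hF.add_smul (c n)).surjective (hc n)
    (hcont.add (continuous_const_smul _)) b
  have hFx (n : ℕ) : F (x n) = b - c n • x n := eq_sub_of_add_eq (hx n)
  obtain ⟨K, hK⟩ := exists_norm_le_of_inner_le_mul_norm hcoer ‖b‖
  have hxK (n : ℕ) : ‖x n‖ ≤ K := hK _ <| by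
    rw [hFx, inner_sub_right, real_inner_smul_right, real_inner_self_eq_norm_sq, mul_comm]
    nlinarith [real_inner_le_norm (x n) b, sq_nonneg ‖x n‖, (hc n).le]
  have hcx : Tendsto (fun n => c n • x n) atTop (𝓝 0) := by
    refine squeeze_zero_norm (fun n => ?_)
      (by simpa only [zero_mul] using tendsto_one_div_add_atTop_nhds_zero_nat.mul_const K)
    rw [norm_smul, Real.norm_of_nonneg (hc n).le]
    exact mul_le_mul_of_nonneg_left (hxK n) (hc n).le
  have hlim : Tendsto (F ∘ x) atTop (𝓝 b) := by
    simpa only [comp_def, hFx, sub_zero] using tendsto_const_nhds.sub hcx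
  obtain ⟨a, rfl⟩ := mem_range_of_tendsto_of_isBounded hcont
    (isBounded_iff_forall_norm_le.2 ⟨K, by simpa using hxK⟩) hlim
  refine ⟨a, rfl, fun y hy => not_not.1 fun hya => ?_⟩
  simpa [hy] using hmono y a hya
end

section
/- Suppose f : ℝ^d × [0,∞) → ℝ^d and g : ℝ^d × [0,∞) → ℝ^{d×m} satisfy 2⟨x, f(x,t)⟩ + |g(x,t)|^2 ≤ C(1+t)^{-K₁} - K₁(1+t)^{-1}|x|^2 for constants C > 0 and K₁ > 1. Let θ ∈ (1/2, 1], 0 < ε < K₁ - 1, and set F(x,t) = x - θΔt·f(x,t). If Δt ≤ (2θ-1)(min(ε,1))/(K₁(K₁-ε)θ²), then for all x ∈ ℝ^d and t ≥ 0: 2⟨x, f(x,t)⟩ + |g(x,t)|^2 + (1-2θ)Δt|f(x,t)|^2 ≤ C(1+t)^{-K₁} - (K₁-ε)(1+t)^{-1}|F(x,t)|^2. -/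
/-!
Write `s = (1 + t)⁻¹ ∈ (0, 1]`. Young's inequality with weight `ε / (K₁ - ε)` gives
`(K₁ - ε) ‖x - y‖² ≤ K₁ ‖x‖² + K₁ (K₁ - ε) / ε ‖y‖²`; applied to `F = x - θΔt f` it bounds
`(K₁ - ε) s ‖F‖²` by `K₁ s ‖x‖²` plus `s K₁ (K₁ - ε) θ² Δt² / ε ‖f‖²`, and the step-size
restriction makes the latter at most `(2θ - 1) Δt ‖f‖²`, which is exactly what the implicit
term `(1 - 2θ) Δt ‖f‖²` on the left-hand side absorbs.
-/

open scoped RealInnerProductSpace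

theorem mul_add_sq_le (a b K : ℝ) {ε : ℝ} (hε : 0 < ε) :
    (K - ε) * (a + b) ^ 2 ≤ K * a ^ 2 + K * (K - ε) / ε * b ^ 2 := by
  have hdiff : K * a ^ 2 + K * (K - ε) / ε * b ^ 2 - (K - ε) * (a + b) ^ 2
      = (ε * a - (K - ε) * b) ^ 2 / ε := by
    field_simp
    ring
  nlinarith [div_nonneg (sq_nonneg (ε * a - (K - ε) * b)) hε.le]

theorem mul_norm_sub_sq_le {E : Type*} [SeminormedAddCommGroup E] (x y : E) {K ε : ℝ}
    (hε : 0 < ε) (hεK : ε ≤ K) :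
    (K - ε) * ‖x - y‖ ^ 2 ≤ K * ‖x‖ ^ 2 + K * (K - ε) / ε * ‖y‖ ^ 2 :=
  calc (K - ε) * ‖x - y‖ ^ 2 ≤ (K - ε) * (‖x‖ + ‖y‖) ^ 2 :=
        mul_le_mul_of_nonneg_left (pow_le_pow_left₀ (norm_nonneg _) (norm_sub_le x y) 2)
          (sub_nonneg.mpr hεK)
    _ ≤ K * ‖x‖ ^ 2 + K * (K - ε) / ε * ‖y‖ ^ 2 := mul_add_sq_le _ _ _ hε

theorem mul_sq_step_le_of_step_le {K ε θ Δt s : ℝ} (hε : 0 < ε) (hεK : ε < K)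
    (hθ : 1 / 2 < θ) (hΔt0 : 0 < Δt)
    (hΔt : Δt ≤ (2 * θ - 1) * min ε 1 / (K * (K - ε) * θ ^ 2)) (hs1 : s ≤ 1) :
    s * (K * (K - ε) / ε) * (θ * Δt) ^ 2 ≤ (2 * θ - 1) * Δt := by
  have hA : 0 < K * (K - ε) * θ ^ 2 := by
    have : 0 < θ := by linarith
    have : 0 < K - ε := by linarith
    have : 0 < K := by linarith
    positivity
  have hstep : K * (K - ε) * θ ^ 2 * Δt ≤ (2 * θ - 1) * ε :=
    calc K * (K - ε) * θ ^ 2 * Δt ≤ (2 * θ - 1) * min ε 1 := by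
          rw [le_div_iff₀ hA] at hΔt
          linarith
      _ ≤ (2 * θ - 1) * ε := by
          gcongr
          · linarith
          · exact min_le_left ε 1
  calc s * (K * (K - ε) / ε) * (θ * Δt) ^ 2
      = s * (Δt / ε) * (K * (K - ε) * θ ^ 2 * Δt) := by field_simp
    _ ≤ 1 * (Δt / ε) * ((2 * θ - 1) * ε) := by gcongr
    _ = (2 * θ - 1) * Δt := by field_simp

theorem key_inequality_polynomial_general (d m : ℕ)
    (f : EuclideanSpace ℝ (Fin d) → ℝ → EuclideanSpace ℝ (Fin d))
    (g : EuclideanSpace ℝ (Fin d) → ℝ → EuclideanSpace ℝ (Fin d × Fin m))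
    (C K₁ θ ε Δt : ℝ)
    (hθ0 : 1/2 < θ) (hε0 : 0 < ε) (hε1 : ε < K₁ - 1)
    (hΔt0 : 0 < Δt) (hΔt : Δt ≤ (2*θ - 1) * min ε 1 / (K₁ * (K₁ - ε) * θ^2))
    (hcond : ∀ x : EuclideanSpace ℝ (Fin d), ∀ t : ℝ, 0 ≤ t →
      2 * ⟪x, f x t⟫ + ‖g x t‖ ^ 2 ≤ C * (1+t) ^ (-K₁) - K₁ * (1+t)⁻¹ * ‖x‖ ^ 2)
    (F : EuclideanSpace ℝ (Fin d) → ℝ → EuclideanSpace ℝ (Fin d))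
    (hF : ∀ x t, F x t = x - (θ * Δt) • f x t) :
    ∀ x : EuclideanSpace ℝ (Fin d), ∀ t : ℝ, 0 ≤ t →
      2 * ⟪x, f x t⟫ + ‖g x t‖ ^ 2 + (1 - 2*θ) * Δt * ‖f x t‖ ^ 2 ≤
        C * (1+t) ^ (-K₁) - (K₁ - ε) * (1+t)⁻¹ * ‖F x t‖ ^ 2 := by
  intro x t ht
  set s := (1 + t)⁻¹
  have hs0 : 0 ≤ s := by positivity
  have hs1 : s ≤ 1 := inv_le_one_of_one_le₀ (by linarith)
  have hεK : ε < K₁ := by linarith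
  have hyoung := mul_norm_sub_sq_le x ((θ * Δt) • f x t) hε0 hεK.le
  rw [norm_smul, Real.norm_eq_abs, mul_pow, sq_abs, ← hF] at hyoung
  have hgain := mul_sq_step_le_of_step_le hε0 hεK hθ0 hΔt0 hΔt hs1
  have hF_bound : (K₁ - ε) * s * ‖F x t‖ ^ 2 ≤ K₁ * s * ‖x‖ ^ 2 + (2 * θ - 1) * Δt * ‖f x t‖ ^ 2 :=
    calc (K₁ - ε) * s * ‖F x t‖ ^ 2
        ≤ s * (K₁ * ‖x‖ ^ 2 + K₁ * (K₁ - ε) / ε * ((θ * Δt) ^ 2 * ‖f x t‖ ^ 2)) := by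
          rw [mul_comm (K₁ - ε), mul_assoc]
          exact mul_le_mul_of_nonneg_left hyoung hs0
      _ ≤ K₁ * s * ‖x‖ ^ 2 + (2 * θ - 1) * Δt * ‖f x t‖ ^ 2 := by
          nlinarith [mul_le_mul_of_nonneg_right hgain (sq_nonneg ‖f x t‖)]
  linarith [hcond x t ht]

theorem key_inequality_polynomial (d m : ℕ)
    (f : EuclideanSpace ℝ (Fin d) → ℝ → EuclideanSpace ℝ (Fin d))
    (g : EuclideanSpace ℝ (Fin d) → ℝ → EuclideanSpace ℝ (Fin d × Fin m))
    (C K₁ θ ε Δt : ℝ) (hC : 0 < C) (hK₁ : 1 < K₁)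
    (hθ0 : 1/2 < θ) (hθ1 : θ ≤ 1) (hε0 : 0 < ε) (hε1 : ε < K₁ - 1)
    (hΔt0 : 0 < Δt) (hΔt : Δt ≤ (2*θ - 1) * min ε 1 / (K₁ * (K₁ - ε) * θ^2))
    (hcond : ∀ x : EuclideanSpace ℝ (Fin d), ∀ t : ℝ, 0 ≤ t →
      2 * ⟪x, f x t⟫ + ‖g x t‖ ^ 2 ≤ C * (1+t) ^ (-K₁) - K₁ * (1+t)⁻¹ * ‖x‖ ^ 2)
    (F : EuclideanSpace ℝ (Fin d) → ℝ → EuclideanSpace ℝ (Fin d))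
    (hF : ∀ x t, F x t = x - (θ * Δt) • f x t) :
    ∀ x : EuclideanSpace ℝ (Fin d), ∀ t : ℝ, 0 ≤ t →
      2 * ⟪x, f x t⟫ + ‖g x t‖ ^ 2 + (1 - 2*θ) * Δt * ‖f x t‖ ^ 2 ≤
        C * (1+t) ^ (-K₁) - (K₁ - ε) * (1+t)⁻¹ * ‖F x t‖ ^ 2 :=
  key_inequality_polynomial_general d m f g C K₁ θ ε Δt hθ0 hε0 hε1 hΔt0 hΔt hcond F hF
end

section
/- Suppose 2⟨x, f(x,t)⟩ + |g(x,t)|² ≤ C(1+t)^{-K₁} - K₁(1+t)^{-1}|x|² with C > 0, K₁ > 1, and let F(x,t) = x - θΔt·f(x,t) with θ ∈ [0,1], Δt > 0. Then for any 0 < ε < K₁, |F(x,t)|² ≥ |x|² - Cθ Δt (1+t)^{-(K₁-ε)} for all x ∈ ℝ^d, t ≥ 0. -/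
open scoped RealInnerProductSpace

theorem F_norm_lower_bound (d m : ℕ)
    (f : EuclideanSpace ℝ (Fin d) → ℝ → EuclideanSpace ℝ (Fin d))
    (g : EuclideanSpace ℝ (Fin d) → ℝ → EuclideanSpace ℝ (Fin d × Fin m))
    (C K₁ θ Δt ε : ℝ) (hC : 0 < C) (hK₁ : 1 < K₁)
    (hθ0 : 0 ≤ θ) (hθ1 : θ ≤ 1) (hΔt : 0 < Δt) (hε0 : 0 < ε) (hε1 : ε < K₁)
    (hcond : ∀ x : EuclideanSpace ℝ (Fin d), ∀ t : ℝ, 0 ≤ t →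
      2 * ⟪x, f x t⟫ + ‖g x t‖ ^ 2 ≤ C * (1+t) ^ (-K₁) - K₁ * (1+t)⁻¹ * ‖x‖ ^ 2)
    (F : EuclideanSpace ℝ (Fin d) → ℝ → EuclideanSpace ℝ (Fin d))
    (hF : ∀ x t, F x t = x - (θ * Δt) • f x t) :
    ∀ x : EuclideanSpace ℝ (Fin d), ∀ t : ℝ, 0 ≤ t →
      ‖F x t‖ ^ 2 ≥ ‖x‖ ^ 2 - C * θ * Δt * (1+t) ^ (-(K₁ - ε)) := by
  intro x t ht
  have h1t : (1:ℝ) ≤ 1 + t := by linarith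
  have hpos : (0:ℝ) < 1 + t := by linarith
  -- inner product bound
  have hinner : 2 * ⟪x, f x t⟫ ≤ C * (1+t) ^ (-K₁) := by
    have h := hcond x t ht
    have hg : (0:ℝ) ≤ ‖g x t‖ ^ 2 := by positivity
    have hx : 0 ≤ K₁ * (1+t)⁻¹ * ‖x‖ ^ 2 := by positivity
    linarith
  have hrpow : (1+t) ^ (-K₁) ≤ (1+t) ^ (-(K₁ - ε)) := by
    apply Real.rpow_le_rpow_of_exponent_le h1t
    linarith
  have hrpos : 0 < (1+t) ^ (-(K₁ - ε)) := Real.rpow_pos_of_pos hpos _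
  have hθΔ : 0 ≤ θ * Δt := by positivity
  have hinner2 : θ * Δt * (2 * ⟪x, f x t⟫) ≤ θ * Δt * (C * (1+t) ^ (-(K₁ - ε))) := by
    apply mul_le_mul_of_nonneg_left _ hθΔ
    calc 2 * ⟪x, f x t⟫ ≤ C * (1+t) ^ (-K₁) := hinner
      _ ≤ C * (1+t) ^ (-(K₁ - ε)) := by
          exact mul_le_mul_of_nonneg_left hrpow hC.le
  have hexp : ‖F x t‖ ^ 2 =
      ‖x‖ ^ 2 - 2 * (θ * Δt) * ⟪x, f x t⟫ + (θ * Δt) ^ 2 * ‖f x t‖ ^ 2 := by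
    rw [hF, norm_sub_sq_real]
    rw [real_inner_smul_right, norm_smul]
    rw [Real.norm_eq_abs, abs_of_nonneg hθΔ]
    ring
  have hsq : 0 ≤ (θ * Δt) ^ 2 * ‖f x t‖ ^ 2 := by positivity
  rw [hexp]
  nlinarith [hinner2]
end

section
/- Let K₁ > 1, 0 < ε < K₁ - 1, k ∈ ℕ, and 0 < Δt small enough that (k - (K₁-ε))Δt + 1 ≥ (kΔt+1)/2 and 1/Δt > K₁ - ε. Then Γ(k + 1/Δt - (K₁-ε))·Γ(1/Δt) / [Γ(k + 1/Δt)·Γ(1/Δt - (K₁-ε))] ≤ ((k-(K₁-ε))Δt + 1)^{-(K₁-ε)}. -/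
/-!
Both bounds come from log-convexity of `Γ` on `(0, ∞)`: since `log Γ (z + 1) - log Γ z = log z`,
the slope of `log Γ` over `[z, z + a]` lies between `log z` (for `a ≥ 1`) and `log (z + a)`
(for `a ≥ 0`). This gives `w ^ a ≤ Γ (w + a) / Γ w` and `Γ (y + a) / Γ y ≤ (y + a) ^ a`; with
`a = K₁ - ε`, `y = 1 / Δt - a` and `w = k + y` their quotient is the claimed bound.
-/

open Real Set

namespace Real

theorem log_Gamma_add_one_sub {z : ℝ} (hz : 0 < z) :
    log (Gamma (z + 1)) - log (Gamma z) = log z := by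
  rw [Gamma_add_one hz.ne', log_mul hz.ne' (Gamma_pos_of_pos hz).ne']
  ring

theorem rpow_mul_Gamma_le_Gamma_add {z a : ℝ} (hz : 0 < z) (ha : 1 ≤ a) :
    z ^ a * Gamma z ≤ Gamma (z + a) := by
  have hza : 0 < z + a := by linarith
  have slope := convexOn_log_Gamma.secant_mono (a := z) (x := z + 1) (y := z + a)
    hz (show 0 < z + 1 by linarith) hza (by linarith) (by linarith) (by linarith)
  simp only [Function.comp_apply, add_sub_cancel_left, div_one, log_Gamma_add_one_sub hz]
    at slope
  rw [← log_le_log_iff (by positivity) (Gamma_pos_of_pos hza),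
    log_mul (by positivity) (Gamma_pos_of_pos hz).ne', log_rpow hz]
  have := (le_div_iff₀ (by linarith : 0 < a)).mp slope
  linarith

theorem Gamma_add_le_rpow_mul_Gamma {z a : ℝ} (hz : 0 < z) (ha : 0 ≤ a) :
    Gamma (z + a) ≤ (z + a) ^ a * Gamma z := by
  rcases ha.eq_or_lt with rfl | ha
  · simp
  have hza : 0 < z + a := by linarith
  have slope := convexOn_log_Gamma.secant_mono (a := z + a) (x := z) (y := z + a + 1)
    hza hz (show 0 < z + a + 1 by linarith) (by linarith) (by linarith) (by linarith)
  simp only [Function.comp_apply, add_sub_cancel_left, div_one, log_Gamma_add_one_sub hza,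
    show z - (z + a) = -a by ring, div_neg, ← neg_div, neg_sub] at slope
  rw [← log_le_log_iff (Gamma_pos_of_pos hza) (by positivity),
    log_mul (by positivity) (Gamma_pos_of_pos hz).ne', log_rpow hza]
  have := (div_le_iff₀ ha).mp slope
  linarith

theorem Gamma_ratio_le_rpow {w y a : ℝ} (hw : 0 < w) (hy : 0 < y) (ha : 1 ≤ a) :
    Gamma w * Gamma (y + a) / (Gamma (w + a) * Gamma y) ≤ ((y + a) / w) ^ a := by
  have hGw := Gamma_pos_of_pos hw
  have hGy := Gamma_pos_of_pos hy
  rw [div_rpow (by linarith) hw.le, div_le_div_iff₀ (by positivity) (by positivity)]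
  calc Gamma w * Gamma (y + a) * w ^ a
      ≤ Gamma w * ((y + a) ^ a * Gamma y) * w ^ a := by
        gcongr; exact Gamma_add_le_rpow_mul_Gamma hy (by linarith)
    _ = (y + a) ^ a * (w ^ a * Gamma w * Gamma y) := by ring
    _ ≤ (y + a) ^ a * (Gamma (w + a) * Gamma y) := by
        gcongr; exact rpow_mul_Gamma_le_Gamma_add hw ha

end Real

theorem gamma_ratio_bound_general (K₁ ε Δt : ℝ) (k : ℕ)
    (hε1 : ε < K₁ - 1)
    (h2 : 1 / Δt > K₁ - ε) :
    Real.Gamma ((k : ℝ) + 1/Δt - (K₁ - ε)) * Real.Gamma (1/Δt) /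
        (Real.Gamma ((k : ℝ) + 1/Δt) * Real.Gamma (1/Δt - (K₁ - ε))) ≤
      (((k : ℝ) - (K₁ - ε)) * Δt + 1) ^ (-(K₁ - ε)) := by
  set a := K₁ - ε
  have ha : 1 ≤ a := by linarith
  have hΔt : 0 < Δt := one_div_pos.mp (by linarith)
  have hy : 0 < 1 / Δt - a := by linarith
  have hw : 0 < (k : ℝ) + 1 / Δt - a := by linarith [(k.cast_nonneg : (0 : ℝ) ≤ k)]
  have hbase : ((k : ℝ) - a) * Δt + 1 = ((k : ℝ) + 1 / Δt - a) * Δt := by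
    field_simp; ring
  calc Gamma ((k : ℝ) + 1/Δt - a) * Gamma (1/Δt) /
        (Gamma ((k : ℝ) + 1/Δt) * Gamma (1/Δt - a))
      = Gamma ((k : ℝ) + 1/Δt - a) * Gamma ((1/Δt - a) + a) /
        (Gamma (((k : ℝ) + 1/Δt - a) + a) * Gamma (1/Δt - a)) := by
        simp only [sub_add_cancel]
    _ ≤ (((1/Δt - a) + a) / ((k : ℝ) + 1/Δt - a)) ^ a := Gamma_ratio_le_rpow hw hy ha
    _ = (((k : ℝ) - a) * Δt + 1) ^ (-a) := by
        rw [hbase, rpow_neg (by positivity), ← inv_rpow (by positivity)]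
        congr 1
        field_simp
        ring

theorem gamma_ratio_bound (K₁ ε Δt : ℝ) (k : ℕ) (hK₁ : 1 < K₁)
    (hε0 : 0 < ε) (hε1 : ε < K₁ - 1) (hΔt : 0 < Δt)
    (h1 : ((k : ℝ) - (K₁ - ε)) * Δt + 1 ≥ ((k : ℝ) * Δt + 1) / 2)
    (h2 : 1 / Δt > K₁ - ε) :
    Real.Gamma ((k : ℝ) + 1/Δt - (K₁ - ε)) * Real.Gamma (1/Δt) /
        (Real.Gamma ((k : ℝ) + 1/Δt) * Real.Gamma (1/Δt - (K₁ - ε))) ≤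
      (((k : ℝ) - (K₁ - ε)) * Δt + 1) ^ (-(K₁ - ε)) :=
  gamma_ratio_bound_general K₁ ε Δt k hε1 h2
end

section
/- Let θ ∈ [0, 1/2], C > 0, 0 < ε < 1, K > 0, and suppose f : ℝ^d × [0,∞) → ℝ^d satisfies |f(x,t)| ≤ K|x| and the one-sided condition 2⟨x,f(x,t)⟩ + |g(x,t)|² ≤ -C|x|². Set F(x,t) = x - θΔt f(x,t) and a := (2θ-1)Δt - Cθ²Δt²(1-ε) (which is ≤ 0). If Δt is small enough that aK² - 2KCθΔt(1-ε) ≥ -Cε, then (2θ-1)Δt|f(x,t)|² - C(1-ε)|F(x,t)|² ≥ -C|x|² for all x ∈ ℝ^d, t ≥ 0. -/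
open scoped RealInnerProductSpace

theorem key_inequality_exponential_small_theta (d m : ℕ)
    (f : EuclideanSpace ℝ (Fin d) → ℝ → EuclideanSpace ℝ (Fin d))
    (g : EuclideanSpace ℝ (Fin d) → ℝ → EuclideanSpace ℝ (Fin d × Fin m))
    (C θ ε K Δt a : ℝ) (hC : 0 < C) (hθ0 : 0 ≤ θ) (hθ1 : θ ≤ 1/2)
    (hε0 : 0 < ε) (hε1 : ε < 1) (hK : 0 < K) (hΔt : 0 < Δt)
    (hgrowth : ∀ x : EuclideanSpace ℝ (Fin d), ∀ t : ℝ, 0 ≤ t → ‖f x t‖ ≤ K * ‖x‖)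
    (hcond : ∀ x : EuclideanSpace ℝ (Fin d), ∀ t : ℝ, 0 ≤ t →
      2 * ⟪x, f x t⟫ + ‖g x t‖ ^ 2 ≤ -C * ‖x‖ ^ 2)
    (ha : a = (2*θ - 1) * Δt - C * θ^2 * Δt^2 * (1 - ε))
    (hsmall : a * K^2 - 2 * K * C * θ * Δt * (1 - ε) ≥ -(C * ε))
    (F : EuclideanSpace ℝ (Fin d) → ℝ → EuclideanSpace ℝ (Fin d))
    (hF : ∀ x t, F x t = x - (θ * Δt) • f x t) :
    ∀ x : EuclideanSpace ℝ (Fin d), ∀ t : ℝ, 0 ≤ t →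
      (2*θ - 1) * Δt * ‖f x t‖ ^ 2 - C * (1 - ε) * ‖F x t‖ ^ 2 ≥ -C * ‖x‖ ^ 2 := by
  intro x t ht
  have hf := hgrowth x t ht
  have hexp : ‖F x t‖ ^ 2 = ‖x‖ ^ 2 - 2 * (θ * Δt) * ⟪x, f x t⟫
      + (θ * Δt) ^ 2 * ‖f x t‖ ^ 2 := by
    rw [hF, norm_sub_sq_real, real_inner_smul_right, norm_smul,
      Real.norm_eq_abs, abs_of_nonneg (mul_nonneg hθ0 hΔt.le)]
    ring
  have hfsq : ‖f x t‖ ^ 2 ≤ K ^ 2 * ‖x‖ ^ 2 := by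
    nlinarith [norm_nonneg (f x t), norm_nonneg x]
  have hip : -(K * ‖x‖ ^ 2) ≤ ⟪x, f x t⟫ := by
    have h1 := abs_real_inner_le_norm x (f x t)
    have h2 := abs_le.mp h1
    nlinarith [norm_nonneg x, h2.1]
  have haneg : a ≤ 0 := by
    have t1 : (2 * θ - 1) * Δt ≤ 0 := mul_nonpos_of_nonpos_of_nonneg (by linarith) hΔt.le
    have t2 : 0 ≤ C * θ ^ 2 * Δt ^ 2 * (1 - ε) :=
      mul_nonneg (mul_nonneg (mul_nonneg hC.le (sq_nonneg θ)) (sq_nonneg Δt)) (by linarith)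
    linarith
  have h1 : a * (K ^ 2 * ‖x‖ ^ 2) ≤ a * ‖f x t‖ ^ 2 :=
    mul_le_mul_of_nonpos_left hfsq haneg
  have hc : 0 ≤ C * (1 - ε) * θ * Δt := by
    apply mul_nonneg (mul_nonneg (mul_nonneg hC.le (by linarith)) hθ0) hΔt.le
  have h2 : C * (1 - ε) * θ * Δt * (-(K * ‖x‖ ^ 2)) ≤
      C * (1 - ε) * θ * Δt * ⟪x, f x t⟫ := mul_le_mul_of_nonneg_left hip hc
  have h3 : -(C * ε) * ‖x‖ ^ 2 ≤ (a * K ^ 2 - 2 * K * C * θ * Δt * (1 - ε)) * ‖x‖ ^ 2 :=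
    mul_le_mul_of_nonneg_right hsmall (sq_nonneg _)
  rw [hexp]
  nlinarith [h1, h2, h3]
end
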